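/- arXiv:2204.14094 — 4 statements merged into one kernel-verified Lean document; each statement's English description precedes it below -/
import Mathlib

section
/- In a single-peaked preference profile, a median peak is a weak Condorcet winner: if candidate c_p is such that at least half of the voters have their peak at c_p or to the left of it on the axis, and at least half have their peak at c_p or to the right of it, then c_p weakly beats every other candidate in pairwise majority comparison. -/
/-! If a candidate `c'` lies left of the median peak `p`, single-peakedness makes every voter
whose peak is at or right of `p` prefer `p` to `c'`; these voters form at least half of the
electorate, and since no voter is indifferent, `p` weakly beats `c'`. The case right of `p` is
symmetric. -/

open Finset

/-- A ranking over `m` candidates: `r c` is the position of candidate `c`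
(position `0` = most preferred). -/
abbrev Ranking (m : ℕ) := Equiv.Perm (Fin m)

/-- Voter with ranking `r` prefers `a` to `b`. -/
def Prefers {m : ℕ} (r : Ranking m) (a b : Fin m) : Prop := r a < r b

/-- A ranking is single-peaked w.r.t. the axis `c_0 ▷ c_1 ▷ ... ▷ c_{m-1}`. -/
def IsSinglePeaked {m : ℕ} (r : Ranking m) : Prop :=
  ∀ i j k : Fin m, i < j → j < k →
    (Prefers r i j → Prefers r j k) ∧ (Prefers r k j → Prefers r j i)

/-- A profile is single-peaked if all its rankings are. -/
def SPProfile {V : Type*} {m : ℕ} (P : V → Ranking m) : Prop :=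
  ∀ v, IsSinglePeaked (P v)

/-- Popularity margin of `a` over `b`. -/
noncomputable def pop {V : Type*} [Fintype V] {m : ℕ} (P : V → Ranking m)
    (a b : Fin m) : ℤ :=
  (Nat.card {v : V // Prefers (P v) a b} : ℤ) -
    (Nat.card {v : V // Prefers (P v) b a} : ℤ)

/-- Minimax Condorcet score of candidate `c`: worst defeat margin. -/
noncomputable def mmc {V : Type*} [Fintype V] {m : ℕ} (P : V → Ranking m)
    (c : Fin m) : WithBot ℤ :=
  (Finset.univ.erase c).sup (fun c' => ((pop P c' c : ℤ) : WithBot ℤ))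

/-- Kendall's tau distance between two rankings. -/
noncomputable def kt {m : ℕ} (r s : Ranking m) : ℕ :=
  Nat.card {p : Fin m × Fin m //
    p.1 < p.2 ∧ ¬ (Prefers r p.1 p.2 ↔ Prefers s p.1 p.2)}

/-- Kemeny score of ranking `r` w.r.t. profile `P`. -/
noncomputable def ktSum {V : Type*} [Fintype V] {m : ℕ} (r : Ranking m)
    (P : V → Ranking m) : ℕ :=
  ∑ v, kt r (P v)

/-- The peak (top candidate) of a ranking. -/
def peak {m : ℕ} (r : Ranking (m + 1)) : Fin (m + 1) := r.symm 0

theorem prefers_or_prefers_of_ne {m : ℕ} (r : Ranking m) {a b : Fin m} (hab : a ≠ b) :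
    Prefers r a b ∨ Prefers r b a :=
  (r.injective.ne hab).lt_or_gt

theorem card_prefers_add_card_prefers {V : Type*} [Fintype V] {m : ℕ} (P : V → Ranking m)
    {a b : Fin m} (hab : a ≠ b) :
    Nat.card {v : V // Prefers (P v) a b} + Nat.card {v : V // Prefers (P v) b a} =
      Fintype.card V := by
  classical
  have hcompl : ∀ v, Prefers (P v) b a ↔ ¬ Prefers (P v) a b := fun v =>
    ⟨lt_asymm, ((prefers_or_prefers_of_ne (P v) hab).resolve_left ·)⟩
  rw [Nat.card_eq_fintype_card, Nat.card_eq_fintype_card,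
    Fintype.card_congr (Equiv.subtypeEquivRight hcompl), Fintype.card_subtype_compl]
  have := Fintype.card_subtype_le fun v => Prefers (P v) a b
  omega

theorem card_prefers_le_of_half_le {V : Type*} [Fintype V] {m : ℕ} (P : V → Ranking m)
    {a b : Fin m} (hab : a ≠ b) (S : V → Prop) (hS : ∀ v, S v → Prefers (P v) a b)
    (hcard : Fintype.card V ≤ 2 * Nat.card {v : V // S v}) :
    Nat.card {v : V // Prefers (P v) b a} ≤ Nat.card {v : V // Prefers (P v) a b} := by
  have hsub : Nat.card {v : V // S v} ≤ Nat.card {v : V // Prefers (P v) a b} :=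
    Nat.card_le_card_of_injective _ (Subtype.impEmbedding _ _ hS).injective
  have := card_prefers_add_card_prefers P hab
  omega

theorem apply_peak {m : ℕ} (r : Ranking (m + 1)) : r (peak r) = 0 := by
  simp [peak]

theorem prefers_peak {m : ℕ} {r : Ranking (m + 1)} {c : Fin (m + 1)} (hc : c ≠ peak r) :
    Prefers r (peak r) c := by
  unfold Prefers
  rw [apply_peak, Fin.pos_iff_ne_zero, ← apply_peak r]
  exact r.injective.ne hc

theorem IsSinglePeaked.prefers_of_peak_le {m : ℕ} {r : Ranking (m + 1)} (hr : IsSinglePeaked r)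
    {a b : Fin (m + 1)} (ha : peak r ≤ a) (hab : a < b) : Prefers r a b := by
  rcases ha.eq_or_lt with rfl | ha
  · exact prefers_peak hab.ne'
  · exact (hr _ _ _ ha hab).1 (prefers_peak ha.ne')

theorem IsSinglePeaked.prefers_of_le_peak {m : ℕ} {r : Ranking (m + 1)} (hr : IsSinglePeaked r)
    {a b : Fin (m + 1)} (ha : a ≤ peak r) (hba : b < a) : Prefers r a b := by
  rcases ha.eq_or_lt with rfl | ha
  · exact prefers_peak hba.ne
  · exact (hr _ _ _ hba ha).2 (prefers_peak ha.ne)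

/-- in a single-peaked profile a median peak is a weak Condorcet
winner. -/
theorem stmt_6 {V : Type*} [Fintype V] {m : ℕ} (P : V → Ranking (m + 1))
    (hsp : SPProfile P) (p : Fin (m + 1))
    (hleft : Fintype.card V ≤ 2 * Nat.card {v : V // peak (P v) ≤ p})
    (hright : Fintype.card V ≤ 2 * Nat.card {v : V // p ≤ peak (P v)}) :
    ∀ c' : Fin (m + 1), c' ≠ p →
      Nat.card {v : V // Prefers (P v) c' p} ≤ Nat.card {v : V // Prefers (P v) p c'} := by
  intro c hc
  rcases hc.lt_or_gt with hlt | hgt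
  · exact card_prefers_le_of_half_le P hc.symm _
      (fun v hv => (hsp v).prefers_of_le_peak hv hlt) hright
  · exact card_prefers_le_of_half_le P hc.symm _
      (fun v hv => (hsp v).prefers_of_peak_le hv hgt) hleft
end

section
/- Every nonempty single-peaked preference profile has at least one single-peaked Kemeny ranking: there exists a ranking r, single-peaked with respect to the same axis as the profile, that minimises the sum over all voters of the Kendall tau distance between r and the voter's ranking, among all rankings. -/
open Finset

/-!
The ranking is built from the bottom up by peeling the axis: the candidates not yet ranked always
form an interval of the axis, and of its two endpoints the one weakly beaten by the other in
pairwise majority is ranked next (lowest among those left). For a single-peaked profile that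
endpoint is weakly beaten by every candidate of the interval, so the ranking agrees with the weak
majority on every pair and hence meets, pair by pair, the least possible number of voter
disagreements. It is single-peaked because only endpoints of intervals are ever removed.
-/

section Prefers

variable {m : ℕ} {r : Ranking m} {a b : Fin m}

instance (r : Ranking m) : DecidableRel (Prefers r) :=
  fun a b => inferInstanceAs (Decidable (r a < r b))

lemma Prefers.asymm (h : Prefers r a b) : ¬ Prefers r b a :=
  lt_asymm h

lemma not_prefers_iff (hab : a ≠ b) : ¬ Prefers r a b ↔ Prefers r b a :=
  ⟨fun h => lt_of_le_of_ne (not_lt.mp h) (r.injective.ne hab).symm, Prefers.asymm⟩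

lemma isSinglePeaked_of_forall_not_valley
    (h : ∀ i j k : Fin m, i < j → j < k → ¬ (Prefers r i j ∧ Prefers r k j)) :
    IsSinglePeaked r := fun i j k hij hjk =>
  ⟨fun hi => (not_prefers_iff hjk.ne').mp fun hk => h i j k hij hjk ⟨hi, hk⟩,
    fun hk => (not_prefers_iff hij.ne).mp fun hi => h i j k hij hjk ⟨hi, hk⟩⟩

lemma IsSinglePeaked.prefers_of_mem_uIoo (hr : IsSinglePeaked r) {x c z : Fin m}
    (hc : c ∈ Set.uIoo x z) (h : Prefers r z c) : Prefers r z x := by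
  rcases lt_or_gt_of_ne (show x ≠ z by rintro rfl; simp at hc) with hxz | hzx
  · rw [Set.uIoo_of_lt hxz] at hc
    exact lt_trans h ((hr x c z hc.1 hc.2).2 h)
  · rw [Set.uIoo_of_gt hzx] at hc
    exact lt_trans h ((hr z c x hc.1 hc.2).1 h)

end Prefers

section Majority

variable {V : Type*} [Fintype V] {m : ℕ}

def prefCount (P : V → Ranking m) (a b : Fin m) : ℕ :=
  #{v | Prefers (P v) a b}

variable {P : V → Ranking m}

lemma prefCount_add_prefCount {a b : Fin m} (hab : a ≠ b) :
    prefCount P a b + prefCount P b a = Fintype.card V := by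
  simp only [prefCount, ← not_prefers_iff hab, Finset.card_filter_add_card_filter_not,
    Finset.card_univ]

lemma prefCount_mono {a b c d : Fin m} (h : ∀ v, Prefers (P v) a b → Prefers (P v) c d) :
    prefCount P a b ≤ prefCount P c d :=
  Finset.card_le_card fun v => by simpa only [Finset.mem_filter_univ] using h v

lemma card_disagree (r : Ranking m) (P : V → Ranking m) {a b : Fin m} (hab : a ≠ b) :
    #{v | ¬ (Prefers r a b ↔ Prefers (P v) a b)} =
      if Prefers r a b then prefCount P b a else prefCount P a b := by
  split_ifs with h <;> simp [prefCount, h, not_prefers_iff hab, not_prefers_iff hab.symm]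

lemma ktSum_eq_sum_pairs (r : Ranking m) (P : V → Ranking m) :
    ktSum r P = ∑ p ∈ {p : Fin m × Fin m | p.1 < p.2},
      if Prefers r p.1 p.2 then prefCount P p.2 p.1 else prefCount P p.1 p.2 := by
  have hkt : ∀ s : Ranking m, kt r s = ∑ p ∈ {p : Fin m × Fin m | p.1 < p.2},
      if ¬ (Prefers r p.1 p.2 ↔ Prefers s p.1 p.2) then 1 else 0 := fun s => by
    rw [kt, Nat.card_eq_fintype_card, Fintype.card_subtype, ← Finset.filter_filter,
      Finset.card_filter]
  simp only [ktSum, hkt]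
  rw [Finset.sum_comm]
  refine Finset.sum_congr rfl fun p hp => ?_
  rw [← Finset.card_filter, card_disagree r P (Finset.mem_filter.mp hp).2.ne]

theorem ktSum_le_of_agrees_with_majority {r : Ranking m}
    (hr : ∀ a b, Prefers r a b → prefCount P b a ≤ prefCount P a b) (s : Ranking m) :
    ktSum r P ≤ ktSum s P := by
  rw [ktSum_eq_sum_pairs, ktSum_eq_sum_pairs]
  refine Finset.sum_le_sum fun p hp => ?_
  have hne := (Finset.mem_filter.mp hp).2.ne
  have hba := hr p.2 p.1
  rw [← not_prefers_iff hne] at hba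
  split_ifs with hrp hs hs
  · exact le_rfl
  · exact hr _ _ hrp
  · exact hba hrp
  · exact le_rfl

end Majority

section Peeling

variable (m : ℕ) (dropHi : ℕ → ℕ → Prop) [DecidableRel dropHi]

-- After `k` peelings the unranked candidates are `[peelLo k, peelLo k + (m - k)]`, and the
-- candidate `peeled k` removed at step `k` gets position `m - k`.
def peelLo : ℕ → ℕ
  | 0 => 0
  | k + 1 => if dropHi (peelLo k) (peelLo k + (m - k)) then peelLo k else peelLo k + 1

def peelHi (k : ℕ) : ℕ := peelLo m dropHi k + (m - k)

def peeled (k : ℕ) : ℕ :=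
  if dropHi (peelLo m dropHi k) (peelHi m dropHi k) then peelHi m dropHi k else peelLo m dropHi k

lemma peel_step (k : ℕ) :
    (peeled m dropHi k = peelHi m dropHi k ∧ peelLo m dropHi (k + 1) = peelLo m dropHi k) ∨
    (peeled m dropHi k = peelLo m dropHi k ∧
      peelLo m dropHi (k + 1) = peelLo m dropHi k + 1) := by
  rw [peeled, peelLo, ← peelHi]
  split_ifs
  · exact .inl ⟨rfl, rfl⟩
  · exact .inr ⟨rfl, rfl⟩

variable {m dropHi}

lemma peelLo_mono : Monotone (peelLo m dropHi) :=
  monotone_nat_of_le_succ fun k => by rcases peel_step m dropHi k with h | h <;> omega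

lemma peelHi_anti {k l : ℕ} (hkl : k ≤ l) (hl : l ≤ m) :
    peelHi m dropHi l ≤ peelHi m dropHi k := by
  induction l, hkl using Nat.le_induction with
  | base => exact le_rfl
  | succ l hkl ih =>
    have := ih (by omega)
    simp only [peelHi] at *
    rcases peel_step m dropHi l with h | h <;> omega

lemma peelHi_le {k : ℕ} (hk : k ≤ m) : peelHi m dropHi k ≤ m := by
  simpa [peelHi, peelLo] using peelHi_anti (m := m) (dropHi := dropHi) (Nat.zero_le k) hk

lemma peeled_mem (k : ℕ) :
    peelLo m dropHi k ≤ peeled m dropHi k ∧ peeled m dropHi k ≤ peelHi m dropHi k := by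
  rcases peel_step m dropHi k with h | h <;> simp only [peelHi] at * <;> omega

lemma peeled_mem_of_le {k l : ℕ} (hkl : k ≤ l) (hl : l ≤ m) :
    peelLo m dropHi k ≤ peeled m dropHi l ∧ peeled m dropHi l ≤ peelHi m dropHi k :=
  ⟨(peelLo_mono hkl).trans (peeled_mem l).1, (peeled_mem l).2.trans (peelHi_anti hkl hl)⟩

lemma peeled_ne {k l : ℕ} (hkl : k < l) (hl : l ≤ m) :
    peeled m dropHi k ≠ peeled m dropHi l := by
  have hmem := peeled_mem_of_le (m := m) (dropHi := dropHi) (show k + 1 ≤ l from hkl) hl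
  have hlo : peelLo m dropHi (k + 1) ≤ peelLo m dropHi l := peelLo_mono hkl
  have hhi : peelHi m dropHi l ≤ peelHi m dropHi (k + 1) := peelHi_anti hkl hl
  rcases peel_step m dropHi k with h | h <;> simp only [peelHi] at * <;> omega

lemma peeled_lt_succ (k : ℕ) (hk : k ≤ m) : peeled m dropHi k < m + 1 :=
  Nat.lt_succ_of_le ((peeled_mem k).2.trans (peelHi_le hk))

variable (m dropHi)

noncomputable def peelOrder : Fin (m + 1) ≃ Fin (m + 1) :=
  Equiv.ofBijective (fun k => ⟨peeled m dropHi k, peeled_lt_succ k k.is_le⟩)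
    (Finite.injective_iff_bijective.mp fun k l h => by
      by_contra hne
      rcases lt_or_gt_of_ne (Fin.val_ne_of_ne hne) with hkl | hlk
      · exact peeled_ne hkl l.is_le (Fin.mk.inj h)
      · exact peeled_ne hlk k.is_le (Fin.mk.inj h).symm)

noncomputable def peelRanking : Ranking (m + 1) :=
  (peelOrder m dropHi).symm.trans Fin.revPerm

variable {m dropHi}

lemma peeled_peelOrder_symm (c : Fin (m + 1)) :
    peeled m dropHi ((peelOrder m dropHi).symm c) = c :=
  congrArg Fin.val ((peelOrder m dropHi).apply_symm_apply c)

lemma prefers_peelRanking_iff {a b : Fin (m + 1)} :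
    Prefers (peelRanking m dropHi) a b ↔
      (peelOrder m dropHi).symm b < (peelOrder m dropHi).symm a := by
  simp [Prefers, peelRanking, Fin.rev_lt_rev]

theorem peelRanking_isSinglePeaked : IsSinglePeaked (peelRanking m dropHi) := by
  refine isSinglePeaked_of_forall_not_valley fun i j k hij hjk ⟨hi, hk⟩ => ?_
  rw [prefers_peelRanking_iff] at hi hk
  set s := (peelOrder m dropHi).symm
  have hmi := peeled_mem_of_le (m := m) (dropHi := dropHi) hi.le (s i).is_le
  have hmk := peeled_mem_of_le (m := m) (dropHi := dropHi) hk.le (s k).is_le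
  rw [peeled_peelOrder_symm] at hmi hmk
  have hij' : (i : ℕ) < j := hij
  have hjk' : (j : ℕ) < k := hjk
  rcases peel_step m dropHi (s j) with h | h <;>
    rw [peeled_peelOrder_symm] at h <;> omega

theorem exists_peeled_of_prefers_peelRanking {a b : Fin (m + 1)}
    (h : Prefers (peelRanking m dropHi) a b) :
    ∃ k ≤ m, (b : ℕ) = peeled m dropHi k ∧
      peelLo m dropHi k ≤ a ∧ (a : ℕ) ≤ peelHi m dropHi k := by
  rw [prefers_peelRanking_iff] at h
  refine ⟨_, ((peelOrder m dropHi).symm b).is_le, (peeled_peelOrder_symm b).symm, ?_⟩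
  rw [← peeled_peelOrder_symm (m := m) (dropHi := dropHi) a]
  exact peeled_mem_of_le h.le ((peelOrder m dropHi).symm a).is_le

end Peeling

section SinglePeakedProfile

variable {V : Type*} [Fintype V] {m : ℕ}

theorem prefCount_le_of_mem_uIcc {P : V → Ranking m} (hsp : SPProfile P) {x c z : Fin m}
    (hc : c ∈ Set.uIcc x z) (hcz : c ≠ z) (hzx : prefCount P z x ≤ prefCount P x z) :
    prefCount P z c ≤ prefCount P c z := by
  rcases eq_or_ne c x with rfl | hcx
  · exact hzx
  have hc' : c ∈ Set.uIoo x z := by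
    rcases Set.mem_uIcc.mp hc with ⟨hxc, hcz'⟩ | ⟨hzc, hcx'⟩
    · exact Set.mem_uIoo_of_lt (hxc.lt_of_ne' hcx) (hcz'.lt_of_ne hcz)
    · exact Set.mem_uIoo_of_gt (hzc.lt_of_ne' hcz) (hcx'.lt_of_ne hcx)
  have hzc : prefCount P z c ≤ prefCount P z x :=
    prefCount_mono fun v => (hsp v).prefers_of_mem_uIoo hc'
  have hxz : x ≠ z := by rintro rfl; simp at hc'
  have := prefCount_add_prefCount (P := P) hcz
  have := prefCount_add_prefCount (P := P) hxz
  omega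

open Fin.NatCast

def majorityDropsHi (P : V → Ranking (m + 1)) (lo hi : ℕ) : Prop :=
  prefCount P (hi : Fin (m + 1)) lo ≤ prefCount P lo hi

instance (P : V → Ranking (m + 1)) : DecidableRel (majorityDropsHi P) :=
  fun _ _ => inferInstanceAs (Decidable (_ ≤ _))

theorem prefCount_le_of_prefers_peelRanking {P : V → Ranking (m + 1)} (hsp : SPProfile P)
    {a b : Fin (m + 1)} (h : Prefers (peelRanking m (majorityDropsHi P)) a b) :
    prefCount P b a ≤ prefCount P a b := by
  obtain ⟨k, hk, hb, hlo, hhi⟩ := exists_peeled_of_prefers_peelRanking h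
  have hhim := peelHi_le (dropHi := majorityDropsHi P) hk
  have hab : a ≠ b := by rintro rfl; exact lt_irrefl _ h
  rw [peeled] at hb
  generalize peelLo m (majorityDropsHi P) k = lo at *
  generalize peelHi m (majorityDropsHi P) k = hi at *
  have hlo' : ((lo : Fin (m + 1)) : ℕ) = lo := Fin.val_cast_of_lt (by omega)
  have hhi' : ((hi : Fin (m + 1)) : ℕ) = hi := Fin.val_cast_of_lt (by omega)
  split_ifs at hb with hdrop
  · obtain rfl : (hi : Fin (m + 1)) = b := Fin.ext (hhi'.trans hb.symm)
    refine prefCount_le_of_mem_uIcc hsp (Set.mem_uIcc.mpr (.inl ⟨?_, ?_⟩)) hab hdrop <;>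
      rw [Fin.le_def] <;> omega
  · obtain rfl : (lo : Fin (m + 1)) = b := Fin.ext (hlo'.trans hb.symm)
    refine prefCount_le_of_mem_uIcc hsp (Set.mem_uIcc.mpr (.inr ⟨?_, ?_⟩)) hab
      (not_le.mp hdrop).le <;> rw [Fin.le_def] <;> omega

end SinglePeakedProfile

theorem stmt_7_general {V : Type*} [Fintype V] {m : ℕ}
    (P : V → Ranking (m + 1)) (hsp : SPProfile P) :
    ∃ r : Ranking (m + 1), IsSinglePeaked r ∧
      ∀ s : Ranking (m + 1), ktSum r P ≤ ktSum s P :=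
  ⟨peelRanking m (majorityDropsHi P), peelRanking_isSinglePeaked,
    ktSum_le_of_agrees_with_majority fun _ _ => prefCount_le_of_prefers_peelRanking hsp⟩

/-- every nonempty single-peaked profile has a single-peaked Kemeny
ranking. -/
theorem stmt_7 {V : Type*} [Fintype V] [Nonempty V] {m : ℕ}
    (P : V → Ranking (m + 1)) (hsp : SPProfile P) :
    ∃ r : Ranking (m + 1), IsSinglePeaked r ∧
      ∀ s : Ranking (m + 1), ktSum r P ≤ ktSum s P :=
  stmt_7_general P hsp
end

section
/- For every single-peaked profile there exists a ranking of the candidates in non-decreasing order of Minimax Condorcet score that is itself single-peaked with respect to the same axis. Equivalently, the MMC score function has no strict interior dip: there is no index i with mmc(c_{i−1}) < mmc(c_i) and mmc(c_{i+1}) < mmc(c_i). -/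
open Finset

/-!
For a single-peaked voter, preferring `a` to `b` with `a < b < c` forces preferring `b` to `c`,
so `pop a b ≤ pop b c`. Hence a defeat margin against an interior candidate `j` is dominated by
one against any candidate on the other side of `j`, and `mmc` is quasiconvex along the axis:
`mmc j ≤ max (mmc i) (mmc k)` for `i < j < k`, which is the no-dip statement. A quasiconvex score
weakly decreases up to a minimiser `p` and weakly increases after it, so sorting by the score and
breaking ties by the distance to `p` gives a single-peaked ranking with peak `p`.
-/

section Ranking

variable {m : ℕ} {α : Type*}

def valleyKey (f : Fin m → α) (p c : Fin m) : α ×ₗ (ℕ ×ₗ Fin m) :=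
  toLex (f c, toLex ((c : ℕ).dist p, c))

theorem valleyKey_injective (f : Fin m → α) (p : Fin m) : Function.Injective (valleyKey f p) :=
  fun a b h => by simp only [valleyKey, toLex_inj, Prod.mk.injEq] at h; exact h.2.2

variable [LinearOrder α]

theorem exists_ranking_lt_iff {K : Fin m → α} (hK : Function.Injective K) :
    ∃ r : Ranking m, ∀ a b, r a < r b ↔ K a < K b := by
  have hmono : StrictMono (K ∘ Tuple.sort K) :=
    (Tuple.monotone_sort K).strictMono_of_injective (hK.comp (Tuple.sort K).injective)
  refine ⟨(Tuple.sort K).symm, fun a b => ?_⟩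
  simpa using (hmono.lt_iff_lt (a := (Tuple.sort K).symm a) (b := (Tuple.sort K).symm b)).symm

theorem isSinglePeaked_of_lt_iff {K : Fin m → α} {r : Ranking m}
    (hr : ∀ a b, r a < r b ↔ K a < K b)
    (hK : ∀ i j k : Fin m, i < j → j < k → K j < K i ∨ K j < K k) : IsSinglePeaked r := by
  intro i j k hij hjk
  simp only [Prefers, hr]
  rcases hK i j k hij hjk with h | h
  · exact ⟨fun h' => absurd h h'.asymm, fun _ => h⟩
  · exact ⟨fun _ => h, fun h' => absurd h h'.asymm⟩

theorem valleyKey_lt_valleyKey {f : Fin m → α} {p i j : Fin m} (hf : f j ≤ f i)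
    (hd : (j : ℕ).dist p < (i : ℕ).dist p) : valleyKey f p j < valleyKey f p i :=
  Prod.Lex.toLex_lt_toLex'.mpr ⟨hf, fun _ => Prod.Lex.toLex_lt_toLex.mpr (Or.inl hd)⟩

theorem valleyKey_no_peak {f : Fin m → α}
    (hf : ∀ i j k : Fin m, i < j → j < k → f j ≤ max (f i) (f k)) {p : Fin m}
    (hp : ∀ c, f p ≤ f c) {i j k : Fin m} (hij : i < j) (hjk : j < k) :
    valleyKey f p j < valleyKey f p i ∨ valleyKey f p j < valleyKey f p k := by
  rcases le_or_gt j p with hjp | hpj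
  · left
    refine valleyKey_lt_valleyKey ?_ ?_
    · rcases hjp.lt_or_eq with hjp | rfl
      · simpa [max_eq_left (hp i)] using hf i j p hij hjp
      · exact hp i
    · simp only [Nat.dist]; omega
  · right
    refine valleyKey_lt_valleyKey ?_ ?_
    · simpa [max_eq_right (hp k)] using hf p j k hpj hjk
    · simp only [Nat.dist]; omega

theorem exists_isSinglePeaked_ranking_monotone {f : Fin m → α}
    (hf : ∀ i j k : Fin m, i < j → j < k → f j ≤ max (f i) (f k)) :
    ∃ r : Ranking m, IsSinglePeaked r ∧ ∀ a b, r a ≤ r b → f a ≤ f b := by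
  cases isEmpty_or_nonempty (Fin m) with
  | inl _ => exact ⟨1, fun i => isEmptyElim i, fun a => isEmptyElim a⟩
  | inr _ =>
    obtain ⟨p, hp⟩ := Finite.exists_min f
    obtain ⟨r, hr⟩ := exists_ranking_lt_iff (valleyKey_injective f p)
    refine ⟨r, isSinglePeaked_of_lt_iff hr fun _ _ _ => valleyKey_no_peak hf hp,
      fun a b hab => ?_⟩
    have hK : valleyKey f p a ≤ valleyKey f p b := not_lt.mp fun h => ((hr b a).mpr h).not_ge hab
    exact Prod.Lex.monotone_fst _ _ hK

end Ranking

section Profile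

variable {V : Type*} [Fintype V] {m : ℕ} {P : V → Ranking m}

theorem pop_swap (P : V → Ranking m) (a b : Fin m) : pop P b a = -pop P a b := by
  unfold pop; ring

theorem card_prefers_le_card_prefers {a b c d : Fin m}
    (h : ∀ v, Prefers (P v) a b → Prefers (P v) c d) :
    Nat.card {v // Prefers (P v) a b} ≤ Nat.card {v // Prefers (P v) c d} :=
  Nat.card_le_card_of_injective (Subtype.map id h) (Subtype.map_injective h Function.injective_id)

theorem pop_le_pop_of_lt_of_lt (hsp : SPProfile P) {a b c : Fin m} (hab : a < b) (hbc : b < c) :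
    pop P a b ≤ pop P b c := by
  have hfor := card_prefers_le_card_prefers fun v => ((hsp v) a b c hab hbc).1
  have hagainst := card_prefers_le_card_prefers fun v => ((hsp v) a b c hab hbc).2
  unfold pop; omega

theorem pop_le_mmc (P : V → Ranking m) {a b : Fin m} (h : a ≠ b) :
    (pop P a b : WithBot ℤ) ≤ mmc P b :=
  Finset.le_sup (f := fun c => (pop P c b : WithBot ℤ)) (mem_erase.mpr ⟨h, mem_univ a⟩)

theorem mmc_le_max (hsp : SPProfile P) {i j k : Fin m} (hij : i < j) (hjk : j < k) :
    mmc P j ≤ max (mmc P i) (mmc P k) := by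
  refine Finset.sup_le fun c hc => ?_
  rcases lt_or_gt_of_ne (ne_of_mem_erase hc) with hcj | hjc
  · calc (pop P c j : WithBot ℤ) ≤ pop P j k := by
          exact_mod_cast pop_le_pop_of_lt_of_lt hsp hcj hjk
      _ ≤ mmc P k := pop_le_mmc P hjk.ne
      _ ≤ _ := le_max_right _ _
  · have hpop : pop P c j ≤ pop P j i := by
      rw [pop_swap P j c, pop_swap P i j]
      exact neg_le_neg (pop_le_pop_of_lt_of_lt hsp hij hjc)
    calc (pop P c j : WithBot ℤ) ≤ pop P j i := by exact_mod_cast hpop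
      _ ≤ mmc P i := pop_le_mmc P hij.ne'
      _ ≤ _ := le_max_left _ _

end Profile

/-- for every single-peaked profile there is a single-peaked
ranking ordering the candidates by non-decreasing MMC score; equivalently the
MMC score has no strict interior dip along the axis. -/
theorem stmt_11 {V : Type*} [Fintype V] {m : ℕ} (P : V → Ranking m)
    (hsp : SPProfile P) :
    (∃ r : Ranking m, IsSinglePeaked r ∧
      ∀ a b : Fin m, r a ≤ r b → mmc P a ≤ mmc P b) ∧
    ∀ i : Fin m, ∀ (h1 : 0 < (i : ℕ)) (h2 : (i : ℕ) + 1 < m),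
      ¬ (mmc P ⟨(i : ℕ) - 1, by omega⟩ < mmc P i ∧
          mmc P ⟨(i : ℕ) + 1, h2⟩ < mmc P i) := by
  refine ⟨exists_isSinglePeaked_ranking_monotone fun _ _ _ => mmc_le_max hsp, ?_⟩
  rintro i h1 h2 ⟨hleft, hright⟩
  have hdip := mmc_le_max hsp (i := ⟨i - 1, by omega⟩) (j := i) (k := ⟨i + 1, h2⟩)
    (Fin.lt_def.mpr (by simp only; omega)) (Fin.lt_def.mpr (by simp only; omega))
  exact (max_lt hleft hright).not_ge hdip
end

section
/- Let P be a profile of n voters with single-peaked rankings over axis c_1 ▷ ... ▷ c_m, and let r↑ = (c_1 ≻ c_2 ≻ ... ≻ c_m). Then r↑ is a Kemeny ranking of P if and only if at least half of the voters have ranking exactly r↑. -/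
/-!
If at least half of the voters report `r`, then `r` is a Kemeny ranking: for any `s`, by the
triangle inequality each dissenting voter is at most `kt s r` further from `r` than from `s`,
while each voter reporting `r` is exactly `kt s r` further from `s` than from `r`.

Conversely, a single-peaked ranking other than `r↑` must put `c_2` above `c_1`, so the ranking
`r' = swap c_1 c_2` is one closer than `r↑` to every such voter and one further from every voter
reporting `r↑`; comparing the Kemeny scores of `r↑` and `r'` gives the bound.
-/

open Finset

section KendallTau

variable {m : ℕ}

instance inst_s15 (r : Ranking m) : DecidableRel (Prefers r) := fun a b =>
  inferInstanceAs (Decidable (r a < r b))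

def discordantPairs (r s : Ranking m) : Finset (Fin m × Fin m) :=
  {p | p.1 < p.2 ∧ ¬ (Prefers r p.1 p.2 ↔ Prefers s p.1 p.2)}

lemma mem_discordantPairs {r s : Ranking m} {p : Fin m × Fin m} :
    p ∈ discordantPairs r s ↔ p.1 < p.2 ∧ ¬ (Prefers r p.1 p.2 ↔ Prefers s p.1 p.2) := by
  simp [discordantPairs]

lemma kt_eq_card_discordantPairs (r s : Ranking m) : kt r s = #(discordantPairs r s) := by
  rw [kt, Nat.card_eq_fintype_card, Fintype.card_subtype, discordantPairs]

lemma kt_self (r : Ranking m) : kt r r = 0 := by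
  simp [kt_eq_card_discordantPairs, discordantPairs]

lemma kt_comm (r s : Ranking m) : kt r s = kt s r := by
  simp only [kt_eq_card_discordantPairs, discordantPairs, iff_comm]

lemma kt_le_add (r s t : Ranking m) : kt r t ≤ kt r s + kt s t := by
  simp only [kt_eq_card_discordantPairs]
  refine (card_le_card fun p hp => ?_).trans (card_union_le _ _)
  simp only [mem_union, mem_discordantPairs] at hp ⊢
  tauto

lemma kt_eq_kt_add_one_of_agree_except {r r' s : Ranking m} {a b : Fin m} (hab : a < b)
    (hagree : ∀ i j, i < j → (i, j) ≠ (a, b) → (Prefers r i j ↔ Prefers r' i j))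
    (hr : ¬ (Prefers r a b ↔ Prefers s a b)) (hr' : Prefers r' a b ↔ Prefers s a b) :
    kt r s = kt r' s + 1 := by
  have hD : discordantPairs r s = insert (a, b) (discordantPairs r' s) := by
    ext ⟨i, j⟩
    simp only [mem_insert, mem_discordantPairs, Prod.mk.injEq]
    by_cases hij : i = a ∧ j = b
    · obtain ⟨rfl, rfl⟩ := hij
      tauto
    · have := hagree i j
      simp only [ne_eq, Prod.mk.injEq] at this
      tauto
  rw [kt_eq_card_discordantPairs, kt_eq_card_discordantPairs, hD, card_insert_of_notMem]
  simp [mem_discordantPairs, hr']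

lemma prefers_swap_zero_one_iff {n : ℕ} {i j : Fin (n + 2)} (hij : i < j)
    (hne : (i, j) ≠ (0, 1)) : Prefers (Equiv.swap 0 1) i j ↔ Prefers (Equiv.refl _) i j := by
  rw [Prefers, Prefers, Equiv.swap_apply_def, Equiv.swap_apply_def, Equiv.refl_apply,
    Equiv.refl_apply]
  rw [ne_eq, Prod.mk.injEq] at hne
  split_ifs <;> simp only [Fin.ext_iff, Fin.lt_def, Fin.val_zero, Fin.val_one] at * <;> omega

lemma kt_refl_eq_kt_swap_add_one {n : ℕ} {s : Ranking (n + 2)} (hs : Prefers s 1 0) :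
    kt (Equiv.refl _) s = kt (Equiv.swap 0 1) s + 1 := by
  have h01 : (0 : Fin (n + 2)) < 1 := Fin.zero_lt_one
  refine kt_eq_kt_add_one_of_agree_except h01
    (fun i j hij hne => (prefers_swap_zero_one_iff hij hne).symm) ?_ ?_
  · simp [Prefers, h01, hs.not_gt]
  · simpa [Prefers, h01.not_gt] using le_of_lt hs

lemma IsSinglePeaked.eq_refl {n : ℕ} {r : Ranking (n + 2)} (hr : IsSinglePeaked r)
    (h01 : Prefers r 0 1) : r = Equiv.refl _ := by
  have step : ∀ i : Fin (n + 1), Prefers r i.castSucc i.succ := by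
    intro i
    induction i using Fin.induction with
    | zero => exact h01
    | succ i ih =>
      rw [← Fin.succ_castSucc]
      exact (hr _ _ _ Fin.castSucc_lt_succ
        (Fin.succ_lt_succ_iff.2 Fin.castSucc_lt_succ)).1 ih
  have hmono : StrictMono r := Fin.strictMono_iff_lt_succ.2 step
  exact Equiv.ext fun x => congrFun hmono.eq_id x

end KendallTau

section Profile

variable {m : ℕ} {V : Type*} [Fintype V] (P : V → Ranking m)

def votersWith (r : Ranking m) : Finset V := {v | P v = r}

lemma natCard_eq_card_votersWith (r : Ranking m) :
    Nat.card {v // P v = r} = #(votersWith P r) := by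
  rw [Nat.card_eq_fintype_card, Fintype.card_subtype, votersWith]

variable [DecidableEq V]

lemma ktSum_eq_card_mul_add_sum_compl (r s : Ranking m) :
    ktSum s P = #(votersWith P r) * kt s r + ∑ v ∈ (votersWith P r)ᶜ, kt s (P v) := by
  have hA : ∑ v ∈ votersWith P r, kt s (P v) = ∑ _v ∈ votersWith P r, kt s r :=
    sum_congr rfl fun v hv => by rw [(mem_filter.1 hv).2]
  rw [ktSum, ← sum_add_sum_compl (votersWith P r), hA, sum_const, smul_eq_mul]

lemma ktSum_le_of_card_compl_le {r : Ranking m}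
    (h : #(votersWith P r)ᶜ ≤ #(votersWith P r)) (s : Ranking m) : ktSum r P ≤ ktSum s P :=
  calc ktSum r P = ∑ v ∈ (votersWith P r)ᶜ, kt r (P v) := by
        rw [ktSum_eq_card_mul_add_sum_compl P r, kt_self, mul_zero, zero_add]
    _ ≤ ∑ v ∈ (votersWith P r)ᶜ, (kt s r + kt s (P v)) :=
        sum_le_sum fun v _ => kt_comm s r ▸ kt_le_add r s (P v)
    _ = #(votersWith P r)ᶜ * kt s r + ∑ v ∈ (votersWith P r)ᶜ, kt s (P v) := by
        rw [sum_add_distrib, sum_const, smul_eq_mul]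
    _ ≤ #(votersWith P r) * kt s r + ∑ v ∈ (votersWith P r)ᶜ, kt s (P v) := by gcongr
    _ = ktSum s P := (ktSum_eq_card_mul_add_sum_compl P r s).symm

end Profile

lemma card_compl_votersWith_refl_le_of_ktSum_le {V : Type*} [Fintype V] [DecidableEq V] {n : ℕ}
    (P : V → Ranking (n + 2)) (hsp : SPProfile P)
    (h : ktSum (Equiv.refl _) P ≤ ktSum (Equiv.swap 0 1) P) :
    #(votersWith P (Equiv.refl _))ᶜ ≤ #(votersWith P (Equiv.refl _)) := by
  have hswap : kt (Equiv.swap 0 1) (Equiv.refl (Fin (n + 2))) = 1 := by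
    rw [kt_comm, kt_refl_eq_kt_swap_add_one, kt_self]
    simp [Prefers]
  have hswapSum := ktSum_eq_card_mul_add_sum_compl P (Equiv.refl _) (Equiv.swap 0 1)
  rw [hswap, mul_one] at hswapSum
  set dissenters := (votersWith P (Equiv.refl (Fin (n + 2))))ᶜ
  have hflip : ∀ v ∈ dissenters, Prefers (P v) 1 0 := fun v hv =>
    (lt_or_gt_of_ne ((P v).injective.ne Fin.zero_ne_one)).resolve_left fun h01 =>
      mem_compl.1 hv <| by simp [votersWith, (hsp v).eq_refl h01]
  have hrefl : ktSum (Equiv.refl _) P =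
      ∑ v ∈ dissenters, kt (Equiv.swap 0 1) (P v) + #dissenters := by
    rw [ktSum_eq_card_mul_add_sum_compl P (Equiv.refl _), kt_self, mul_zero, zero_add,
      sum_congr rfl fun v hv => kt_refl_eq_kt_swap_add_one (hflip v hv),
      sum_add_distrib, sum_const, smul_eq_mul, mul_one]
  omega

/-- in a single-peaked profile, the extreme ranking
`r↑ = c_1 ≻ ... ≻ c_m` (the identity ranking) is a Kemeny ranking iff at least
half of the voters have ranking exactly `r↑`. -/
theorem stmt_15 {V : Type*} [Fintype V] {m : ℕ} (P : V → Ranking m)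
    (hsp : SPProfile P) :
    (∀ s : Ranking m, ktSum (Equiv.refl (Fin m)) P ≤ ktSum s P) ↔
      Fintype.card V ≤ 2 * Nat.card {v : V // P v = Equiv.refl (Fin m)} := by
  classical
  rw [natCard_eq_card_votersWith, ← card_add_card_compl (votersWith P (Equiv.refl _)), two_mul,
    add_le_add_iff_left]
  refine ⟨fun h => ?_, ktSum_le_of_card_compl_le P⟩
  obtain _ | _ | n := m
  · simp [votersWith, Subsingleton.elim _ (Equiv.refl (Fin 0))]
  · simp [votersWith, Subsingleton.elim _ (Equiv.refl (Fin 1))]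
  · exact card_compl_votersWith_refl_le_of_ktSum_le P hsp (h _)
end
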